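/- arXiv:2108.03616 — 3 statements merged into one kernel-verified Lean document; each statement's English description precedes it below -/
import Mathlib

section
/- Let W ⊂ R^n be a linear subspace. Then κ_W = 1 if and only if there exists a totally unimodular matrix A such that W = ker(A). -/
/-!
If `A` is totally unimodular and `g` is an elementary vector of `ker A`, then removing one index
`i` from the support of `g` leaves linearly independent columns of `A`, so some square submatrix
`B` on them is nonsingular. Cramer's rule then writes every `g j` as `± g i` times a subdeterminant
of `A`, and all these subdeterminants are `0` or `±1`.

Conversely, write `W = ker A` where `A` contains an identity submatrix. Each remaining column `p`
gives a fundamental circuit whose entries are `1` (at `p`) and `-A k p`, so all entries of `A` are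
`0` or `±1`. The same holds for `B⁻¹ * A` whenever `B` is a nonsingular maximal column submatrix,
so `B` and `B⁻¹` are both integral and `det B = ±1`. Finally, adding identity columns turns any
square submatrix of `A` into a maximal one with the same determinant.
-/

open Finset

variable {ι : Type*} [Fintype ι] [DecidableEq ι]

/-- `y` conforms to `x` if `x i * y i > 0` whenever `y i ≠ 0`. -/
def Conforms (y x : ι → ℝ) : Prop := ∀ i, y i ≠ 0 → x i * y i > 0

/-- An elementary vector of `W`: a support-minimal nonzero vector of `W`. -/
def IsElementary (W : Submodule ℝ (ι → ℝ)) (g : ι → ℝ) : Prop :=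
  g ∈ W ∧ g ≠ 0 ∧
    ∀ h ∈ W, h ≠ 0 → {i | h i ≠ 0} ⊆ {i | g i ≠ 0} → {i | h i ≠ 0} = {i | g i ≠ 0}

/-- The fractional circuit imbalance measure `κ_W`. -/
noncomputable def kappa (W : Submodule ℝ (ι → ℝ)) : ℝ :=
  sSup ({1} ∪ {t : ℝ | ∃ g : ι → ℝ, IsElementary W g ∧
    ∃ i j, g i ≠ 0 ∧ g j ≠ 0 ∧ t = |g j| / |g i|})

/-- An integer elementary vector, normalized so that the gcd of its entries is 1. -/
def IsIntElementary (W : Submodule ℝ (ι → ℝ)) (g : ι → ℤ) : Prop :=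
  IsElementary W (fun i => (g i : ℝ)) ∧ Finset.univ.gcd (fun i => (g i).natAbs) = 1

/-- The max-circuit imbalance measure `κ̄_W`. -/
noncomputable def barKappa (W : Submodule ℝ (ι → ℝ)) : ℕ :=
  sSup {k : ℕ | ∃ g : ι → ℤ, IsIntElementary W g ∧
    k = Finset.univ.sup fun i => (g i).natAbs}

/-- The lcm-circuit imbalance measure `κ̇_W`: the least positive integer divisible by
every entry of every normalized integer elementary vector. -/
noncomputable def dotKappa (W : Submodule ℝ (ι → ℝ)) : ℕ :=
  sInf {k : ℕ | 0 < k ∧ ∀ g : ι → ℤ, IsIntElementary W g → ∀ i, g i ≠ 0 → (g i).natAbs ∣ k}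

/-- A rational linear subspace: one spanned by rational vectors. -/
def IsRationalSubspace (W : Submodule ℝ (ι → ℝ)) : Prop :=
  ∃ S : Set (ι → ℚ), W = Submodule.span ℝ ((fun v : ι → ℚ => fun i => ((v i : ℝ))) '' S)

/-- The orthogonal complement of `W` in `ℝ^ι` with the standard inner product. -/
def orthComp (W : Submodule ℝ (ι → ℝ)) : Submodule ℝ (ι → ℝ) where
  carrier := {v | ∀ w ∈ W, ∑ i, v i * w i = 0}
  add_mem' := by
    intro a b ha hb w hw
    have := ha w hw
    have := hb w hw
    simp only [Set.mem_setOf_eq, Pi.add_apply, add_mul, Finset.sum_add_distrib, *]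
    ring
  zero_mem' := by intro w hw; simp
  smul_mem' := by
    intro c a ha w hw
    have h := ha w hw
    simp only [Set.mem_setOf_eq, Pi.smul_apply, smul_eq_mul, mul_assoc, ← Finset.mul_sum, h,
      mul_zero]

/-- A totally unimodular matrix: every square subdeterminant is `0`, `1` or `-1`. -/
def IsTU {m n : ℕ} (A : Matrix (Fin m) (Fin n) ℝ) : Prop :=
  ∀ (k : ℕ) (r : Fin k → Fin m) (c : Fin k → Fin n),
    (A.submatrix r c).det = 0 ∨ (A.submatrix r c).det = 1 ∨ (A.submatrix r c).det = -1

open Matrix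

def HasUnitCircuitRatios {n : Type*} (W : Submodule ℝ (n → ℝ)) : Prop :=
  ∀ g, IsElementary W g → ∀ i j, g i ≠ 0 → g j ≠ 0 → |g i| = |g j|

theorem kappa_eq_one_iff {n : Type*} (W : Submodule ℝ (n → ℝ)) :
    kappa W = 1 ↔ HasUnitCircuitRatios W := by
  set T : Set ℝ := {t | ∃ g : n → ℝ, IsElementary W g ∧
    ∃ i j, g i ≠ 0 ∧ g j ≠ 0 ∧ t = |g j| / |g i|}
  have hkappa : kappa W = sSup ({1} ∪ T) := rfl
  constructor
  · intro hk g hg i j hi hj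
    have hbdd : BddAbove ({1} ∪ T) := by
      by_contra h
      rw [hkappa, Real.sSup_of_not_bddAbove h] at hk
      exact zero_ne_one hk
    have hle : ∀ {i j}, g i ≠ 0 → g j ≠ 0 → |g j| ≤ |g i| := fun {i j} hi hj => by
      have := le_csSup hbdd (Or.inr ⟨g, hg, i, j, hi, hj, rfl⟩)
      rwa [← hkappa, hk, div_le_one (abs_pos.mpr hi)] at this
    exact le_antisymm (hle hj hi) (hle hi hj)
  · intro hW
    have hT : T ⊆ {1} := by
      rintro _ ⟨g, hg, i, j, hi, hj, rfl⟩
      rw [Set.mem_singleton_iff, hW g hg i j hi hj, div_self (abs_ne_zero.mpr hj)]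
    rw [hkappa, Set.union_eq_left.mpr hT, csSup_singleton]

theorem IsElementary.eq_zero_of_support_subset {n : Type*} {W : Submodule ℝ (n → ℝ)}
    {g h : n → ℝ} (hg : IsElementary W g) (hh : h ∈ W) (hsupp : ∀ q, h q ≠ 0 → g q ≠ 0)
    {i : n} (hgi : g i ≠ 0) (hhi : h i = 0) : h = 0 := by
  by_contra hne
  have hi : i ∈ {q | h q ≠ 0} := hg.2.2 h hh hne hsupp ▸ hgi
  exact hi hhi

namespace Matrix

variable {m n o o' R K : Type*}

theorem det_submatrix_comp_equiv [Fintype o] [DecidableEq o] [Fintype o'] [DecidableEq o']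
    [CommRing R] (A : Matrix m n R) (r : o → m) (c : o → n) (e : o' ≃ o) :
    (A.submatrix (r ∘ e) (c ∘ e)).det = (A.submatrix r c).det := by
  rw [← submatrix_submatrix, det_submatrix_equiv_self]

theorem mulVec_eq_submatrix_mulVec_comp [Fintype n] [Fintype o] [NonUnitalNonAssocSemiring R]
    (A : Matrix m n R) {e : o → n} (he : e.Injective) (z : n → R)
    (hz : ∀ q ∉ Set.range e, z q = 0) : A *ᵥ z = A.submatrix id e *ᵥ (z ∘ e) := by
  funext k
  exact (Fintype.sum_of_injective e he _ _ (fun q hq => by simp [hz q hq]) fun _ => rfl).symm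

variable [Fintype m] [Field K]

theorem ker_mulVecLin_mul [DecidableEq m] [Fintype n] {B : Matrix m m K} (hB : IsUnit B.det)
    (A : Matrix m n K) : LinearMap.ker (B * A).mulVecLin = LinearMap.ker A.mulVecLin := by
  rw [mulVecLin_mul, LinearMap.ker_comp_of_ker_eq_bot]
  exact LinearMap.ker_eq_bot.mpr
    (mulVec_injective_iff_isUnit.mpr ((isUnit_iff_isUnit_det B).mpr hB))

theorem submatrix_nonsing_inv_mul_eq_one [DecidableEq m] [Fintype n] {A : Matrix m n K} {c : m → n}
    (h : IsUnit (A.submatrix id c).det) : ((A.submatrix id c)⁻¹ * A).submatrix id c = 1 := by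
  rw [submatrix_mul _ _ id id c Function.bijective_id, submatrix_id_id, nonsing_inv_mul _ h]

theorem exists_submatrix_det_ne_zero [Fintype n] [DecidableEq n] (M : Matrix m n K)
    (h : LinearIndependent K M.col) : ∃ r : n → m, (M.submatrix r id).det ≠ 0 := by
  have hrank : Module.finrank K (Submodule.span K (Set.range M.row)) = Fintype.card n := by
    rw [← rank_eq_finrank_span_row, ← rank_transpose]
    exact LinearIndependent.rank_matrix (by rwa [row_transpose])
  obtain ⟨f, hf, -, hli⟩ := Submodule.exists_fun_fin_finrank_span_eq K (Set.range M.row)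
  choose r hr using hf
  let e := Fintype.equivFinOfCardEq hrank.symm
  refine ⟨r ∘ e, ?_⟩
  have hrows : (M.submatrix (r ∘ e) id).row = f ∘ e := funext fun k => hr (e k)
  rw [← isUnit_iff_ne_zero, ← isUnit_iff_isUnit_det, ← linearIndependent_rows_iff_isUnit, hrows]
  exact hli.comp e e.injective

end Matrix

theorem exists_submatrix_eq_one_and_ker_eq {n K : Type*} [Fintype n] [DecidableEq n] [Field K]
    (W : Submodule K (n → K)) : ∃ (m : ℕ) (A : Matrix (Fin m) n K) (c : Fin m → n),
      A.submatrix id c = 1 ∧ W = LinearMap.ker A.mulVecLin := by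
  let f := (Module.finBasis K ((n → K) ⧸ W)).equivFun.toLinearMap ∘ₗ W.mkQ
  let A₀ := LinearMap.toMatrix' f
  have hA₀ : A₀.mulVecLin = f := by rw [← toLin'_apply', toLin'_toMatrix']
  have hker : LinearMap.ker A₀.mulVecLin = W := by
    rw [hA₀, LinearEquiv.ker_comp, Submodule.ker_mkQ]
  have hrows : LinearIndependent K A₀.row := by
    have hsurj : LinearMap.range A₀.mulVecLin = ⊤ := by
      rw [hA₀, LinearMap.range_eq_top]
      exact (Module.finBasis K _).equivFun.surjective.comp W.mkQ_surjective
    rw [linearIndependent_iff_card_eq_finrank_span, Set.finrank, ← rank_eq_finrank_span_row,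
      rank, hsurj, finrank_top, Module.finrank_fin_fun, Fintype.card_fin]
  obtain ⟨c, hc⟩ := A₀ᵀ.exists_submatrix_det_ne_zero (by rwa [col_transpose])
  have hdet : IsUnit (A₀.submatrix id c).det := by
    rwa [isUnit_iff_ne_zero, ← det_transpose, transpose_submatrix]
  refine ⟨_, _, c, submatrix_nonsing_inv_mul_eq_one hdet, ?_⟩
  rw [ker_mulVecLin_mul (isUnit_nonsing_inv_det _ hdet), hker]

section StandardForm

variable {m n K : Type*} [Field K] {A : Matrix m n K} {c : m → n}

theorem injective_of_submatrix_eq_one [DecidableEq m] (hc : A.submatrix id c = 1) :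
    c.Injective := by
  intro a b hab
  have h := congr_fun (congr_fun hc a) b
  rw [submatrix_apply, id, ← hab, one_apply] at h
  by_contra hne
  have ha := congr_fun (congr_fun hc a) a
  rw [submatrix_apply, id, one_apply_eq, h, if_neg hne] at ha
  exact zero_ne_one ha

theorem mulVec_eq_comp_of_submatrix_eq_one [Fintype m] [DecidableEq m] [Fintype n]
    (hc : A.submatrix id c = 1) (z : n → K) (hz : ∀ q ∉ Set.range c, z q = 0) : A *ᵥ z = z ∘ c := by
  rw [mulVec_eq_submatrix_mulVec_comp A (injective_of_submatrix_eq_one hc) z hz, hc, one_mulVec]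

variable (A c) in
/-- For `A.submatrix id c = 1` and `p ∉ Set.range c`: the kernel vector of `A` supported on
`Set.range c ∪ {p}` with `p`-entry `1`. -/
noncomputable def fundamentalCircuit [DecidableEq n] (p : n) : n → K :=
  Pi.single p 1 - Function.extend c (fun k => A k p) 0

theorem fundamentalCircuit_apply_self [DecidableEq n] {p : n} (hp : p ∉ Set.range c) :
    fundamentalCircuit A c p p = 1 := by
  simp [fundamentalCircuit, Function.extend_apply' _ _ _ hp]

theorem fundamentalCircuit_apply_basis [DecidableEq m] [DecidableEq n]
    (hc : A.submatrix id c = 1) {p : n} (hp : p ∉ Set.range c) (k : m) :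
    fundamentalCircuit A c p (c k) = -A k p := by
  have hne : c k ≠ p := fun h => hp ⟨k, h⟩
  simp [fundamentalCircuit, hne, (injective_of_submatrix_eq_one hc).extend_apply]

theorem fundamentalCircuit_apply_of_notMem [DecidableEq n] {p q : n} (hq : q ∉ Set.range c)
    (hqp : q ≠ p) : fundamentalCircuit A c p q = 0 := by
  simp [fundamentalCircuit, hqp, Function.extend_apply' _ _ _ hq]

theorem mulVec_fundamentalCircuit [Fintype m] [DecidableEq m] [Fintype n] [DecidableEq n]
    (hc : A.submatrix id c = 1) (p : n) : A *ᵥ fundamentalCircuit A c p = 0 := by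
  have hext : A *ᵥ Function.extend c (fun k => A k p) 0 = fun k => A k p := by
    rw [mulVec_eq_comp_of_submatrix_eq_one hc _
      fun q hq => Function.extend_apply' (fun k => A k p) (0 : n → K) q hq]
    exact funext ((injective_of_submatrix_eq_one hc).extend_apply (fun k => A k p) 0)
  rw [fundamentalCircuit, mulVec_sub, hext, mulVec_single_one, sub_eq_zero]
  rfl

theorem eq_smul_fundamentalCircuit [Fintype m] [DecidableEq m] [Fintype n] [DecidableEq n]
    (hc : A.submatrix id c = 1) {p : n} (hp : p ∉ Set.range c)
    {y : n → K} (hy : A *ᵥ y = 0) (hsupp : ∀ q ∉ Set.range c, q ≠ p → y q = 0) :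
    y = y p • fundamentalCircuit A c p := by
  set z := y - y p • fundamentalCircuit A c p
  have hz : ∀ q ∉ Set.range c, z q = 0 := by
    intro q hq
    rcases eq_or_ne q p with rfl | hqp
    · simp [z, fundamentalCircuit_apply_self hq]
    · simp [z, hsupp q hq hqp, fundamentalCircuit_apply_of_notMem hq hqp]
  have hzc : z ∘ c = 0 := by
    rw [← mulVec_eq_comp_of_submatrix_eq_one hc z hz, mulVec_sub, mulVec_smul, hy,
      mulVec_fundamentalCircuit hc, smul_zero, sub_zero]
  have : z = 0 := by
    funext q
    by_cases hq : q ∈ Set.range c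
    · obtain ⟨k, rfl⟩ := hq
      exact congr_fun hzc k
    · exact hz q hq
  exact sub_eq_zero.mp this

end StandardForm

section UnitCircuitRatios

variable {m n : Type*} [Fintype m] [DecidableEq m] [Fintype n] [DecidableEq n]
  {A : Matrix m n ℝ} {c : m → n}

theorem isElementary_fundamentalCircuit (hc : A.submatrix id c = 1) {p : n}
    (hp : p ∉ Set.range c) :
    IsElementary (LinearMap.ker A.mulVecLin) (fundamentalCircuit A c p) := by
  refine ⟨mulVec_fundamentalCircuit hc p, fun h => ?_, fun y hy hy0 hsub => ?_⟩
  · simpa [fundamentalCircuit_apply_self hp] using congr_fun h p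
  have hy_eq : y = y p • fundamentalCircuit A c p :=
    eq_smul_fundamentalCircuit hc hp hy fun q hq hqp => by
      by_contra hyq
      exact hsub hyq (fundamentalCircuit_apply_of_notMem hq hqp)
  have hyp : y p ≠ 0 := fun h => hy0 (by rw [hy_eq, h, zero_smul])
  refine hsub.antisymm fun q hq => ?_
  change y q ≠ 0
  rw [hy_eq, Pi.smul_apply, smul_eq_mul]
  exact mul_ne_zero hyp hq

theorem HasUnitCircuitRatios.entry_mem (hW : HasUnitCircuitRatios (LinearMap.ker A.mulVecLin))
    (hc : A.submatrix id c = 1) (k : m) (p : n) : A k p ∈ ({0, 1, -1} : Set ℝ) := by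
  by_cases hp : p ∈ Set.range c
  · obtain ⟨j, rfl⟩ := hp
    rw [show A k (c j) = (1 : Matrix m m ℝ) k j from congr_fun (congr_fun hc k) j, one_apply]
    split_ifs <;> simp
  by_cases hkp : A k p = 0
  · exact Or.inl hkp
  have h := hW _ (isElementary_fundamentalCircuit hc hp) (c k) p
    (by rwa [fundamentalCircuit_apply_basis hc hp, neg_ne_zero])
    (by rw [fundamentalCircuit_apply_self hp]; exact one_ne_zero)
  rw [fundamentalCircuit_apply_basis hc hp, fundamentalCircuit_apply_self hp, abs_neg,
    abs_one] at h
  exact Or.inr ((abs_eq zero_le_one).mp h)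

end UnitCircuitRatios

theorem Matrix.exists_det_eq_intCast {m R : Type*} [Fintype m] [DecidableEq m] [CommRing R]
    {M : Matrix m m R} (h : ∀ i j, ∃ z : ℤ, M i j = z) : ∃ z : ℤ, M.det = z := by
  choose N hN using h
  refine ⟨(Matrix.of N).det, ?_⟩
  rw [← eq_intCast (Int.castRingHom R), RingHom.map_det]
  congr 1
  ext i j
  exact hN i j

theorem HasUnitCircuitRatios.det_submatrix_mem {m n : Type*} [Fintype m] [DecidableEq m]
    [Fintype n] [DecidableEq n] {A : Matrix m n ℝ} {c : m → n}
    (hW : HasUnitCircuitRatios (LinearMap.ker A.mulVecLin)) (hc : A.submatrix id c = 1)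
    (c' : m → n) : (A.submatrix id c').det ∈ ({0, 1, -1} : Set ℝ) := by
  set B := A.submatrix id c'
  by_cases h0 : B.det = 0
  · exact Or.inl h0
  have hB : IsUnit B.det := isUnit_iff_ne_zero.mpr h0
  have hint : ∀ {M : Matrix m n ℝ} {d : m → n}, HasUnitCircuitRatios (LinearMap.ker M.mulVecLin) →
      M.submatrix id d = 1 → ∀ k p, ∃ z : ℤ, M k p = z := fun hM hd k p => by
    rcases hM.entry_mem hd k p with h | h | h <;> rw [h]
    exacts [⟨0, by simp⟩, ⟨1, by simp⟩, ⟨-1, by simp⟩]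
  -- `B⁻¹ * A` has the same kernel and an identity at `c'`, so `B⁻¹` is integral as well.
  have hinv : (B⁻¹ * A).submatrix id c = B⁻¹ := by
    rw [submatrix_mul _ _ id id c Function.bijective_id, hc, submatrix_id_id, Matrix.mul_one]
  obtain ⟨u, hu⟩ := exists_det_eq_intCast (M := B) fun k q => hint hW hc k (c' q)
  obtain ⟨v, hv⟩ := exists_det_eq_intCast (M := B⁻¹) fun k q => by
    rw [← hinv]
    exact hint (by rwa [ker_mulVecLin_mul (isUnit_nonsing_inv_det B hB)])
      (submatrix_nonsing_inv_mul_eq_one hB) k (c q)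
  have huv : u * v = 1 := by
    have : B.det * B⁻¹.det = 1 := by rw [← det_mul, mul_nonsing_inv B hB, det_one]
    rw [hu, hv] at this
    exact_mod_cast this
  rcases Int.eq_one_or_neg_one_of_mul_eq_one huv with rfl | rfl
  · exact Or.inr (Or.inl (by simpa using hu))
  · exact Or.inr (Or.inr (by simpa using hu))

theorem isTU_of_submatrix_eq_one {m n : ℕ} {A : Matrix (Fin m) (Fin n) ℝ} {c : Fin m → Fin n}
    (hc : A.submatrix id c = 1)
    (hmax : ∀ c' : Fin m → Fin n, (A.submatrix id c').det ∈ ({0, 1, -1} : Set ℝ)) :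
    IsTU A := by
  intro k r c'
  by_cases hr : r.Injective
  swap
  · obtain ⟨a, b, hab, hne⟩ := Function.not_injective_iff.mp hr
    exact Or.inl (det_zero_of_row_eq hne (by ext; simp [hab]))
  -- complete the rows `r` by the remaining rows and the columns `c'` by the matching unit columns
  let e : Fin k ⊕ {i // i ∉ Set.range r} ≃ Fin m :=
    (Equiv.sumCongr (Equiv.ofInjective r hr) (Equiv.refl _)).trans (Equiv.sumCompl _)
  let C : Fin k ⊕ {i // i ∉ Set.range r} → Fin n := Sum.elim c' fun i => c i
  have hunit : ∀ a b, A a (c b) = (1 : Matrix (Fin m) (Fin m) ℝ) a b := fun a b =>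
    congr_fun (congr_fun hc a) b
  have hblocks : A.submatrix e C = fromBlocks (A.submatrix r c') 0
      (A.submatrix (fun i : {i // i ∉ Set.range r} => (i : Fin m)) c') 1 := by
    ext (a | i) (b | j)
    · rfl
    · simp only [submatrix_apply, fromBlocks_apply₁₂, Matrix.zero_apply, e, C, Equiv.trans_apply,
        Equiv.sumCongr_apply, Sum.map_inl, Sum.elim_inr, Equiv.sumCompl_apply_inl,
        Equiv.ofInjective_apply, hunit, one_apply]
      exact if_neg fun h => j.2 ⟨a, h⟩
    · rfl
    · simp [e, C, hunit, one_apply, Subtype.ext_iff]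
  have hdet : (A.submatrix id (C ∘ e.symm)).det = (A.submatrix r c').det := by
    have h := det_submatrix_comp_equiv A e C e.symm
    rw [Equiv.self_comp_symm] at h
    rw [h, hblocks, det_fromBlocks_zero₁₂, det_one, mul_one]
  exact hdet ▸ hmax (C ∘ e.symm)

theorem linearIndependent_col_of_isElementary {m n : Type*} [Fintype n] [DecidableEq n]
    {A : Matrix m n ℝ} {g : n → ℝ} (hg : IsElementary (LinearMap.ker A.mulVecLin) g) {i : n}
    (hi : g i ≠ 0) :
    LinearIndependent ℝ (A.submatrix id (Subtype.val : {q // g q ≠ 0 ∧ q ≠ i} → n)).col := by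
  rw [← mulVec_injective_iff, ← coe_mulVecLin, ← LinearMap.ker_eq_bot, LinearMap.ker_eq_bot']
  intro μ hμ
  set z := Function.extend Subtype.val μ 0
  have hzμ : z ∘ Subtype.val = μ := funext (Subtype.val_injective.extend_apply μ 0)
  have hz : ∀ q ∉ Set.range (Subtype.val : {q // g q ≠ 0 ∧ q ≠ i} → n), z q = 0 :=
    fun q hq => Function.extend_apply' μ (0 : n → ℝ) q hq
  have hzker : z ∈ LinearMap.ker A.mulVecLin := by
    rw [LinearMap.mem_ker, mulVecLin_apply, mulVec_eq_submatrix_mulVec_comp A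
      Subtype.val_injective z hz, hzμ]
    exact hμ
  have hsupp : ∀ q, z q ≠ 0 → g q ≠ 0 := fun q hzq hgq =>
    hzq (hz q fun ⟨d, hd⟩ => d.2.1 (hd ▸ hgq))
  rw [← hzμ, hg.eq_zero_of_support_subset hzker hsupp hi (hz i fun ⟨d, hd⟩ => d.2.2 hd)]
  rfl

theorem IsTU.det_submatrix_mem {m n : ℕ} {A : Matrix (Fin m) (Fin n) ℝ} (hA : IsTU A)
    {o : Type*} [Fintype o] [DecidableEq o] (r : o → Fin m) (c : o → Fin n) :
    (A.submatrix r c).det ∈ ({0, 1, -1} : Set ℝ) := by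
  rw [← det_submatrix_comp_equiv A r c (Fintype.equivFin o).symm]
  exact hA _ _ _

theorem Matrix.det_smul_eq_cramer {o R : Type*} [Fintype o] [DecidableEq o] [CommRing R]
    {B : Matrix o o R} {x y : o → R} (h : B *ᵥ x = y) : B.det • x = B.cramer y := by
  rw [cramer_eq_adjugate_mulVec, ← h, mulVec_mulVec, adjugate_mul, smul_mulVec, one_mulVec]

theorem Matrix.submatrix_mulVec_eq_of_mulVec_eq_zero {m n o K : Type*} [Fintype n] [DecidableEq n]
    [Field K] [DecidableEq K] {A : Matrix m n K} {g : n → K} (hg : A *ᵥ g = 0) (i : n) (r : o → m) :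
    A.submatrix r (Subtype.val : {q // g q ≠ 0 ∧ q ≠ i} → n) *ᵥ (fun d => g d) =
      -g i • fun d => A (r d) i := by
  have hsupp : ∀ q ∉ Set.range (Subtype.val : {q // g q ≠ 0 ∧ q ≠ i} → n),
      Function.update g i 0 q = 0 := by
    intro q hq
    rcases eq_or_ne q i with rfl | hqi
    · exact Function.update_self _ _ _
    · rw [Function.update_of_ne hqi]
      by_contra hgq
      exact hq ⟨⟨q, hgq, hqi⟩, rfl⟩
  have hupd : Function.update g i 0 = g - Pi.single i (g i) := by
    funext q
    rcases eq_or_ne q i with rfl | hq <;> simp [*]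
  have hA : A *ᵥ Function.update g i 0 = fun k => -g i * A k i := by
    rw [hupd, mulVec_sub, hg, mulVec_single]
    funext k
    simp [mul_comm]
  have hcomp : Function.update g i 0 ∘ Subtype.val = fun d : {q // g q ≠ 0 ∧ q ≠ i} => g d :=
    funext fun d => Function.update_of_ne d.2.2 _ _
  rw [mulVec_eq_submatrix_mulVec_comp A Subtype.val_injective _ hsupp, hcomp] at hA
  exact funext fun d => congr_fun hA (r d)

theorem IsTU.abs_le_of_isElementary {m n : ℕ} {A : Matrix (Fin m) (Fin n) ℝ} (hA : IsTU A)
    {g : Fin n → ℝ} (hg : IsElementary (LinearMap.ker A.mulVecLin) g) {i : Fin n}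
    (hi : g i ≠ 0) (j : Fin n) : |g j| ≤ |g i| := by
  rcases eq_or_ne (g j) 0 with hj0 | hj0
  · rw [hj0, abs_zero]
    exact abs_nonneg _
  rcases eq_or_ne j i with rfl | hji
  · rfl
  obtain ⟨r, hr⟩ := exists_submatrix_det_ne_zero _ (linearIndependent_col_of_isElementary hg hi)
  set B := A.submatrix r (Subtype.val : {q // g q ≠ 0 ∧ q ≠ i} → Fin n)
  replace hr : B.det ≠ 0 := hr
  let j' : {q // g q ≠ 0 ∧ q ≠ i} := ⟨j, hj0, hji⟩
  set C := A.submatrix r (Function.update Subtype.val j' i)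
  have hentry : B.det * g j = -g i * C.det := by
    have hAg : A *ᵥ g = 0 := LinearMap.mem_ker.mp hg.1
    have h := congr_fun (det_smul_eq_cramer (submatrix_mulVec_eq_of_mulVec_eq_zero hAg i r)) j'
    have hcol : B.updateCol j' (fun d => A (r d) i) = C := by
      ext a d
      by_cases hd : d = j' <;> simp [B, C, hd, Function.update_of_ne]
    rw [map_smul] at h
    simp only [Pi.smul_apply, smul_eq_mul, cramer_apply] at h
    rw [← hcol]
    exact h
  have hB : |B.det| = 1 := by
    obtain h | h | h : B.det = 0 ∨ B.det = 1 ∨ B.det = -1 := hA.det_submatrix_mem _ _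
    exacts [absurd h hr, by simp [h], by simp [h]]
  have hC : |C.det| ≤ 1 := by
    obtain h | h | h : C.det = 0 ∨ C.det = 1 ∨ C.det = -1 := hA.det_submatrix_mem _ _ <;>
      simp [h]
  calc |g j| = |B.det * g j| := by rw [abs_mul, hB, one_mul]
    _ = |g i| * |C.det| := by rw [hentry, abs_mul, abs_neg]
    _ ≤ |g i| := mul_le_of_le_one_right (abs_nonneg _) hC

theorem IsTU.hasUnitCircuitRatios {m n : ℕ} {A : Matrix (Fin m) (Fin n) ℝ} (hA : IsTU A) :
    HasUnitCircuitRatios (LinearMap.ker A.mulVecLin) := fun _ hg i j hi hj =>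
  le_antisymm (hA.abs_le_of_isElementary hg hj i) (hA.abs_le_of_isElementary hg hi j)

/-- `κ_W = 1` iff `W` is the kernel of a totally unimodular matrix. -/
theorem kappa_eq_one_iff_TU {n : ℕ} (W : Submodule ℝ (Fin n → ℝ)) :
    kappa W = 1 ↔ ∃ (m : ℕ) (A : Matrix (Fin m) (Fin n) ℝ),
      IsTU A ∧ W = LinearMap.ker A.mulVecLin := by
  rw [kappa_eq_one_iff]
  constructor
  · intro hW
    obtain ⟨m, A, c, hc, rfl⟩ := exists_submatrix_eq_one_and_ker_eq W
    exact ⟨m, A, isTU_of_submatrix_eq_one hc (hW.det_submatrix_mem hc), rfl⟩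
  · rintro ⟨m, A, hA, rfl⟩
    exact hA.hasUnitCircuitRatios
end

section
/- For any rational linear subspace W ⊆ R^n, the lcm-circuit imbalances of W and its orthogonal complement are equal: κ̇_W = κ̇_{W^⊥}. -/
open Finset

variable {ι : Type*} [Fintype ι] [DecidableEq ι]

set_option linter.unusedSectionVars false
set_option maxHeartbeats 1000000

open Classical in
lemma mem_orthComp {W : Submodule ℝ (ι → ℝ)} {x : ι → ℝ} :
    x ∈ orthComp W ↔ ∀ w ∈ W, ∑ i, x i * w i = 0 := Iff.rfl

lemma orthComp_anti {U V : Submodule ℝ (ι → ℝ)} (h : U ≤ V) : orthComp V ≤ orthComp U :=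
  fun _ hx w hw => hx w (h hw)

lemma le_orthComp_orthComp (U : Submodule ℝ (ι → ℝ)) : U ≤ orthComp (orthComp U) := by
  intro x hx w hw
  have := hw x hx
  calc ∑ i, x i * w i = ∑ i, w i * x i := by simp [mul_comm]
  _ = 0 := this

lemma mem_orthComp_span {T : Set (ι → ℝ)} {x : ι → ℝ}
    (h : ∀ t ∈ T, ∑ i, x i * t i = 0) : x ∈ orthComp (Submodule.span ℝ T) := by
  intro w hw
  induction hw using Submodule.span_induction with
  | mem t ht => exact h t ht
  | zero => simp
  | add a b _ _ ha hb => simp [Pi.add_apply, mul_add, Finset.sum_add_distrib, ha, hb]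
  | smul c a _ ha =>
      simp only [Pi.smul_apply, smul_eq_mul, mul_left_comm, ← Finset.mul_sum, ha, mul_zero]

/-- Any vector of `W` whose support is inside the support of an elementary vector is a
scalar multiple of it. -/
lemma IsElementary.prop {W : Submodule ℝ (ι → ℝ)} {g x : ι → ℝ} (hg : IsElementary W g)
    (hx : x ∈ W) (hsupp : ∀ k, x k ≠ 0 → g k ≠ 0) : ∃ t : ℝ, x = t • g := by
  by_cases hx0 : x = 0
  · exact ⟨0, by simp [hx0]⟩
  have hsupp' : {k | x k ≠ 0} = {k | g k ≠ 0} := hg.2.2 x hx hx0 hsupp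
  obtain ⟨i, hi⟩ : ∃ i, g i ≠ 0 := by
    by_contra hc
    push_neg at hc
    exact hg.2.1 (funext fun i => hc i)
  refine ⟨x i / g i, ?_⟩
  by_contra hne
  set y : ι → ℝ := x - (x i / g i) • g with hy
  have hyW : y ∈ W := W.sub_mem hx (W.smul_mem _ hg.1)
  have hy0 : y ≠ 0 := by
    intro h0
    apply hne
    have : x - (x i / g i) • g = 0 := h0
    rw [sub_eq_zero] at this
    exact this
  have hysupp : ∀ k, y k ≠ 0 → g k ≠ 0 := by
    intro k hk
    by_contra hgk
    have hxk : x k = 0 := by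
      by_contra hxk
      exact (hsupp k hxk) hgk
    apply hk
    simp [hy, hxk, hgk]
  have := hg.2.2 y hyW hy0 hysupp
  have hyi : y i = 0 := by
    simp [hy, div_mul_cancel₀ _ hi]
  have : i ∈ {k | y k ≠ 0} := by
    rw [this]; exact hi
  exact this hyi

lemma IsElementary.smul {W : Submodule ℝ (ι → ℝ)} {g : ι → ℝ} {t : ℝ} (hg : IsElementary W g)
    (ht : t ≠ 0) : IsElementary W (t • g) := by
  have hsupp : {k | (t • g) k ≠ 0} = {k | g k ≠ 0} := by
    ext k; simp [ht]
  exact ⟨W.smul_mem t hg.1, by simpa [ht, smul_eq_zero] using hg.2.1,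
    fun h hh hh0 hs => by rw [hsupp] at hs ⊢; exact hg.2.2 h hh hh0 hs⟩


section DoubleOrth

noncomputable def phiE : EuclideanSpace ℝ ι ≃ₗ[ℝ] (ι → ℝ) := WithLp.linearEquiv 2 ℝ (ι → ℝ)

lemma orthComp_eq_map (U : Submodule ℝ (ι → ℝ)) :
    orthComp U = (Submodule.comap (phiE (ι := ι)).toLinearMap U)ᗮ.map (phiE).toLinearMap := by
  ext x
  constructor
  · intro hx
    refine ⟨(phiE (ι := ι)).symm x, ?_, by simp⟩
    intro y hy
    have := hx (phiE (ι := ι) y) hy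
    simpa [PiLp.inner_apply, RCLike.inner_apply, phiE, mul_comm] using this
  · rintro ⟨y, hy, rfl⟩ w hw
    have := hy ((phiE (ι := ι)).symm w) (by simpa [phiE] using hw)
    simpa [PiLp.inner_apply, RCLike.inner_apply, phiE, mul_comm] using this

lemma orthComp_orthComp (U : Submodule ℝ (ι → ℝ)) : orthComp (orthComp U) = U := by
  rw [orthComp_eq_map (orthComp U), orthComp_eq_map U]
  have h1 : Submodule.comap (phiE (ι := ι)).toLinearMap
      (Submodule.map (phiE (ι := ι)).toLinearMap (Submodule.comap (phiE (ι := ι)).toLinearMap U)ᗮ)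
      = (Submodule.comap (phiE (ι := ι)).toLinearMap U)ᗮ := by
    ext y; simp [Submodule.mem_comap, Submodule.mem_map_equiv]
  rw [h1, Submodule.orthogonal_orthogonal]
  ext x; simp [Submodule.mem_map_equiv, Submodule.mem_comap]

end DoubleOrth


/-- Two normalized integer elementary vectors with nested supports have equal `natAbs`. -/
lemma IsIntElementary.natAbs_eq {W : Submodule ℝ (ι → ℝ)} {g h : ι → ℤ}
    (hg : IsIntElementary W g) (hh : IsIntElementary W h)
    (hsub : ∀ k, h k ≠ 0 → g k ≠ 0) : ∀ k, (h k).natAbs = (g k).natAbs := by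
  obtain ⟨t, ht⟩ := hg.1.prop hh.1.1 (by
    intro k hk
    have : h k ≠ 0 := by exact_mod_cast hk
    exact_mod_cast hsub k this)
  have key : ∀ k i : ι, h k * g i = g k * h i := by
    intro k i
    have hk : (h k : ℝ) = t * (g k : ℝ) := by
      have := congrFun ht k; simpa using this
    have hi : (h i : ℝ) = t * (g i : ℝ) := by
      have := congrFun ht i; simpa using this
    have : (h k : ℝ) * (g i : ℝ) = (g k : ℝ) * (h i : ℝ) := by
      rw [hk, hi]; ring
    exact_mod_cast this
  intro i
  have keyn : ∀ k, (h k).natAbs * (g i).natAbs = (g k).natAbs * (h i).natAbs := by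
    intro k
    rw [← Int.natAbs_mul, ← Int.natAbs_mul, key k i]
  have e1 : (Finset.univ.gcd fun k => (h k).natAbs * (g i).natAbs)
      = (Finset.univ.gcd fun k => (g k).natAbs * (h i).natAbs) := by
    apply Finset.gcd_congr rfl
    intro k _
    exact keyn k
  rw [Finset.gcd_mul_right, Finset.gcd_mul_right, hg.2, hh.2] at e1
  simpa using e1.symm

open Classical in
/-- A common multiple candidate for the entries of all normalized integer elementary vectors. -/
noncomputable def elemFac (W : Submodule ℝ (ι → ℝ)) (C : Finset ι) : ℕ :=
  if hC : ∃ g : ι → ℤ, IsIntElementary W g ∧ ∀ i, i ∈ C ↔ g i ≠ 0 then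
    ∏ i ∈ C, ((hC.choose) i).natAbs
  else 1

open Classical in
noncomputable def elemProd (W : Submodule ℝ (ι → ℝ)) : ℕ :=
  ∏ C ∈ Finset.univ.powerset, elemFac W C

open Classical in
lemma elemFac_pos (W : Submodule ℝ (ι → ℝ)) (C : Finset ι) : 0 < elemFac W C := by
  rw [elemFac]
  split_ifs with hC
  · apply Finset.prod_pos
    intro i hi
    have := (hC.choose_spec.2 i).mp hi
    simpa [Int.natAbs_pos] using this
  · norm_num

open Classical in
lemma elemProd_pos (W : Submodule ℝ (ι → ℝ)) : 0 < elemProd W :=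
  Finset.prod_pos fun C _ => elemFac_pos W C

open Classical in
lemma natAbs_dvd_elemProd {W : Submodule ℝ (ι → ℝ)} {g : ι → ℤ} (hg : IsIntElementary W g)
    {i : ι} (hi : g i ≠ 0) : (g i).natAbs ∣ elemProd W := by
  set C : Finset ι := Finset.univ.filter (fun k => g k ≠ 0) with hCdef
  have hC : ∃ g' : ι → ℤ, IsIntElementary W g' ∧ ∀ k, k ∈ C ↔ g' k ≠ 0 :=
    ⟨g, hg, fun k => by simp [hCdef]⟩
  have hspec := hC.choose_spec
  have habs : ∀ k, ((hC.choose) k).natAbs = (g k).natAbs := by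
    apply IsIntElementary.natAbs_eq hg hspec.1
    intro k hk
    have : k ∈ C := (hspec.2 k).mpr hk
    simpa [hCdef] using this
  have h1 : (g i).natAbs ∣ elemFac W C := by
    rw [elemFac, dif_pos hC]
    rw [← habs i]
    exact Finset.dvd_prod_of_mem _ (by simp [hCdef, hi])
  exact h1.trans (Finset.dvd_prod_of_mem _ (by simp [hCdef] : C ∈ Finset.univ.powerset))

lemma dotKappa_mem (W : Submodule ℝ (ι → ℝ)) :
    0 < dotKappa W ∧ ∀ g : ι → ℤ, IsIntElementary W g → ∀ i, g i ≠ 0 →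
      (g i).natAbs ∣ dotKappa W := by
  have : dotKappa W ∈ {k : ℕ | 0 < k ∧ ∀ g : ι → ℤ, IsIntElementary W g →
      ∀ i, g i ≠ 0 → (g i).natAbs ∣ k} :=
    Nat.sInf_mem ⟨elemProd W, elemProd_pos W, fun g hg i hi => natAbs_dvd_elemProd hg hi⟩
  exact this



/-- The `k`-th standard basis vector. -/
def esing (k : ι) : ι → ℝ := fun m => if m = k then 1 else 0

lemma sum_mul_esing (x : ι → ℝ) (k : ι) : ∑ m, x m * esing k m = x k := by
  rw [Finset.sum_eq_single k]
  · simp [esing]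
  · intro b _ hb
    simp [esing, hb]
  · simp

lemma orthComp_sup (U V : Submodule ℝ (ι → ℝ)) :
    orthComp (U ⊔ V) = orthComp U ⊓ orthComp V := by
  apply le_antisymm
  · exact le_inf (orthComp_anti le_sup_left) (orthComp_anti le_sup_right)
  · rintro x ⟨hU, hV⟩ w hw
    obtain ⟨a, ha, b, hb, rfl⟩ := Submodule.mem_sup.mp hw
    have : ∑ m, x m * (a + b) m = (∑ m, x m * a m) + ∑ m, x m * b m := by
      simp [Pi.add_apply, mul_add, Finset.sum_add_distrib]
    rw [this, hU a ha, hV b hb, add_zero]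

lemma span_singles_vanish {D : Set ι} {x : ι → ℝ}
    (hx : x ∈ Submodule.span ℝ ((fun k => esing k) '' D)) :
    ∀ m ∉ D, x m = 0 := by
  intro m hm
  induction hx using Submodule.span_induction with
  | mem t ht =>
      obtain ⟨k, hk, rfl⟩ := ht
      have : m ≠ k := fun h => hm (h ▸ hk)
      simp [esing, this]
  | zero => simp
  | add a b _ _ ha hb => simp [Pi.add_apply, ha, hb]
  | smul c a _ ha => simp [Pi.smul_apply, ha]

open Classical in
/-- The swap lemma: for an elementary vector `g` of `W` and `i ≠ j` in its support, there is
an elementary vector `h` of `orthComp W` supported inside `supp g → {i,j}`, giving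
`h i * g i + h j * g j = 0` with `h i, h j ≠ 0`. -/
lemma swap_lemma {W : Submodule ℝ (ι → ℝ)} {g : ι → ℝ} (hg : IsElementary W g) {i j : ι}
    (hij : i ≠ j) (hgi : g i ≠ 0) (hgj : g j ≠ 0) :
    ∃ h : ι → ℝ, IsElementary (orthComp W) h ∧ h i ≠ 0 ∧ h j ≠ 0 ∧
      h i * g i + h j * g j = 0 := by
  set D : Set ι := {k | g k ≠ 0 ∧ k ≠ i ∧ k ≠ j} with hD
  set E := Submodule.span ℝ ((fun k => esing k) '' D) with hE
  have hiD : i ∉ D := fun h => h.2.1 rfl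
  have hjD : j ∉ D := fun h => h.2.2 rfl
  -- the set of candidate vectors
  set F : Set (ι → ℝ) := {x | x ∈ orthComp W ∧ (∀ k ∈ D, x k = 0) ∧ x i ≠ 0} with hF
  -- Step 1 : F is nonempty
  have hFne : F.Nonempty := by
    by_contra hFe
    rw [Set.not_nonempty_iff_eq_empty, Set.eq_empty_iff_forall_notMem] at hFe
    have hPzero : ∀ x ∈ orthComp (W ⊔ E), x i = 0 := by
      intro x hx
      rw [orthComp_sup] at hx
      by_contra hxi
      refine hFe x ⟨hx.1, ?_, hxi⟩
      intro k hk
      have : ∑ m, x m * esing k m = 0 :=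
        hx.2 _ (Submodule.subset_span ⟨k, hk, rfl⟩)
      rwa [sum_mul_esing] at this
    have hP : orthComp (W ⊔ E) ≤ orthComp (Submodule.span ℝ {esing i}) := by
      intro x hx
      apply mem_orthComp_span
      rintro t rfl
      rw [sum_mul_esing]
      exact hPzero x hx
    have h2 := orthComp_anti hP
    have h3 : esing i ∈ W ⊔ E := by
      have hmem : esing i ∈ orthComp (orthComp (W ⊔ E)) :=
        h2 (le_orthComp_orthComp _ (Submodule.subset_span rfl))
      rwa [orthComp_orthComp] at hmem
    obtain ⟨w, hw, e, he, hsum⟩ := Submodule.mem_sup.mp h3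
    have heD := span_singles_vanish (he)
    have hwdef : ∀ k, w k = esing i k - e k := by
      intro k
      have := congrFun hsum k
      simp only [Pi.add_apply] at this
      linarith
    have hwi : w i = 1 := by rw [hwdef i, heD i hiD]; simp [esing]
    have hwj : w j = 0 := by
      rw [hwdef j, heD j hjD]
      have : j ≠ i := fun h => hij h.symm
      simp [esing, this]
    have hw0 : w ≠ 0 := fun h0 => by simp [h0] at hwi
    have hwsupp : {k | w k ≠ 0} ⊆ {k | g k ≠ 0} := by
      intro k hk
      by_contra hgk
      have hgk' : g k = 0 := not_not.mp hgk
      have hki : k ≠ i := fun h => hgi (h ▸ hgk')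
      have : w k = 0 := by
        rw [hwdef k, heD k (fun hmem => hmem.1 hgk')]
        simp [esing, hki]
      exact hk this
    have := hg.2.2 w hw hw0 hwsupp
    have hjmem : j ∈ {k | w k ≠ 0} := by rw [this]; exact hgj
    exact hjmem hwj
  -- Step 2 : pick a minimal-support element of F
  obtain ⟨x0, hx0⟩ := hFne
  set card : (ι → ℝ) → ℕ := fun x => (Finset.univ.filter (fun k => x k ≠ 0)).card with hcard
  set S : Set ℕ := {m | ∃ x ∈ F, card x = m} with hS
  have hSne : S.Nonempty := ⟨card x0, x0, hx0, rfl⟩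
  obtain ⟨h, hhF, hhcard⟩ := Nat.sInf_mem hSne
  have hmin : ∀ x ∈ F, card h ≤ card x := by
    intro x hx
    rw [hhcard]
    exact Nat.sInf_le ⟨x, hx, rfl⟩
  obtain ⟨hhW, hhD, hhi⟩ := hhF
  have hh0 : h ≠ 0 := fun h0 => hhi (by simp [h0])
  -- Step 3 : h is elementary
  have helem : IsElementary (orthComp W) h := by
    refine ⟨hhW, hh0, ?_⟩
    intro f hf hf0 hfsupp
    have hfD : ∀ k ∈ D, f k = 0 := by
      intro k hk
      by_contra hfk
      exact (hfsupp hfk) (hhD k hk)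
    by_cases hfi : f i ≠ 0
    · -- f ∈ F, so by minimality supports coincide
      have hfF : f ∈ F := ⟨hf, hfD, hfi⟩
      have hsubF : Finset.univ.filter (fun k => f k ≠ 0) ⊆
          Finset.univ.filter (fun k => h k ≠ 0) := by
        intro k hk
        simp only [Finset.mem_filter, Finset.mem_univ, true_and] at hk ⊢
        exact hfsupp hk
      have := Finset.eq_of_subset_of_card_le hsubF (hmin f hfF)
      ext k
      constructor
      · intro hk; exact hfsupp hk
      · intro hk
        have : k ∈ Finset.univ.filter (fun k => f k ≠ 0) := by
          rw [this]; simp only [Finset.mem_filter, Finset.mem_univ, true_and]; exact hk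
        simpa using this
    · -- otherwise we can shrink the support of h, contradiction
      exfalso
      push_neg at hfi
      obtain ⟨m, hm⟩ : ∃ m, f m ≠ 0 := by
        by_contra hc
        push_neg at hc
        exact hf0 (funext hc)
      have hhm : h m ≠ 0 := hfsupp hm
      set f' : ι → ℝ := h - (h m / f m) • f with hf'
      have hf'W : f' ∈ orthComp W := Submodule.sub_mem _ hhW (Submodule.smul_mem _ _ hf)
      have hf'D : ∀ k ∈ D, f' k = 0 := by
        intro k hk
        simp [hf', hhD k hk, hfD k hk]
      have hf'i : f' i ≠ 0 := by
        simp only [hf', Pi.sub_apply, Pi.smul_apply, smul_eq_mul, hfi, mul_zero, sub_zero]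
        exact hhi
      have hf'F : f' ∈ F := ⟨hf'W, hf'D, hf'i⟩
      have hf'm : f' m = 0 := by
        simp [hf', div_mul_cancel₀ _ hm]
      have hsub' : Finset.univ.filter (fun k => f' k ≠ 0) ⊆
          (Finset.univ.filter (fun k => h k ≠ 0)).erase m := by
        intro k hk
        simp only [Finset.mem_filter, Finset.mem_univ, true_and, Finset.mem_erase] at hk ⊢
        constructor
        · intro hkm; exact hk (hkm ▸ hf'm)
        · by_contra hhk
          apply hk
          have hfk : f k = 0 := by
            by_contra hfk
            exact (hfsupp hfk) hhk
          simp [hf', hhk, hfk]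
      have hmmem : m ∈ Finset.univ.filter (fun k => h k ≠ 0) := by
        simp [hhm]
      have hlt : card f' < card h := by
        calc card f' ≤ ((Finset.univ.filter (fun k => h k ≠ 0)).erase m).card :=
              Finset.card_le_card hsub'
        _ < (Finset.univ.filter (fun k => h k ≠ 0)).card :=
              Finset.card_erase_lt_of_mem hmmem
      exact absurd (hmin f' hf'F) (not_le.mpr hlt)
  -- Step 4 : the two-term orthogonality relation
  have hsum : ∑ k, h k * g k = 0 := hhW g hg.1
  have hred : ∑ k ∈ ({i, j} : Finset ι), h k * g k = ∑ k, h k * g k := by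
    apply Finset.sum_subset (Finset.subset_univ _)
    intro k _ hk
    simp only [Finset.mem_insert, Finset.mem_singleton] at hk
    push_neg at hk
    by_cases hgk : g k = 0
    · simp [hgk]
    · have : k ∈ D := ⟨hgk, hk.1, hk.2⟩
      simp [hhD k this]
  rw [← hred, Finset.sum_pair hij] at hsum
  have hhj : h j ≠ 0 := by
    intro h0
    rw [h0, zero_mul, add_zero] at hsum
    exact hhi (by
      rcases mul_eq_zero.mp hsum with h1 | h2
      · exact h1
      · exact absurd h2 hgi)
  exact ⟨h, helem, hhi, hhj, hsum⟩


/-- Componentwise cast of a rational vector to a real vector. -/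
def castv (v : ι → ℚ) : ι → ℝ := fun i => ((v i : ℝ))

lemma castv_mem_span {S : Set (ι → ℚ)} {q : ι → ℚ} (hq : q ∈ Submodule.span ℚ S) :
    castv q ∈ Submodule.span ℝ (castv '' S) := by
  induction hq using Submodule.span_induction with
  | mem t ht => exact Submodule.subset_span (Set.mem_image_of_mem _ ht)
  | zero =>
      have : castv (0 : ι → ℚ) = 0 := by ext i; simp [castv]
      rw [this]; exact Submodule.zero_mem _
  | add a b _ _ ha hb =>
      have : castv (a + b) = castv a + castv b := by ext i; simp [castv]
      rw [this]; exact Submodule.add_mem _ ha hb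
  | smul c a _ ha =>
      have : castv (c • a) = (c : ℝ) • castv a := by ext i; simp [castv]
      rw [this]; exact Submodule.smul_mem _ _ ha

lemma mulVec_castCommute {α β : Type*} [Fintype β] (B : Matrix α β ℚ) (v : β → ℚ) :
    (B.map (fun q : ℚ => (q : ℝ))).mulVec (fun b => ((v b : ℝ))) =
      fun a => ((B.mulVec v a : ℝ)) := by
  ext a
  simp only [Matrix.mulVec, dotProduct, Matrix.map_apply]
  push_cast
  rfl

open Classical in
/-- For `W` given as the real span of rational vectors, every elementary vector of `W`
is a real multiple of (the cast of) a rational vector. -/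
lemma elementary_rational_span {S : Set (ι → ℚ)} {W : Submodule ℝ (ι → ℝ)}
    (hW : W = Submodule.span ℝ (castv '' S)) {g : ι → ℝ} (hg : IsElementary W g) :
    ∃ q : ι → ℚ, ∃ t : ℝ, t ≠ 0 ∧ castv q = t • g := by
  set U : Submodule ℚ (ι → ℚ) := Submodule.span ℚ S with hU
  by_cases hex : ∃ q : ι → ℚ, q ≠ 0 ∧ q ∈ U ∧ ∀ k, g k = 0 → q k = 0
  · obtain ⟨q, hq0, hqU, hqv⟩ := hex
    have hqW : castv q ∈ W := by rw [hW]; exact castv_mem_span hqU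
    have hqsupp : ∀ k, castv q k ≠ 0 → g k ≠ 0 := by
      intro k hk hgk
      exact hk (by simp [castv, hqv k hgk])
    obtain ⟨t, ht⟩ := hg.prop hqW hqsupp
    refine ⟨q, t, ?_, ht⟩
    intro ht0
    apply hq0
    ext k
    have := congrFun ht k
    rw [ht0] at this
    simpa [castv] using this
  · exfalso
    -- build a left inverse of the restriction to the zero set of `g`
    set σ := {k : ι // g k = 0}
    set ρ : (ι → ℚ) →ₗ[ℚ] (σ → ℚ) :=
      { toFun := fun q k => q k.1
        map_add' := fun a b => rfl
        map_smul' := fun c a => rfl } with hρ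
    set ρU : U →ₗ[ℚ] (σ → ℚ) := ρ.comp U.subtype with hρU
    have hker : LinearMap.ker ρU = ⊥ := by
      rw [LinearMap.ker_eq_bot']
      intro x hx
      by_contra hx0
      apply hex
      refine ⟨x.1, ?_, x.2, ?_⟩
      · intro h0; exact hx0 (Subtype.ext h0)
      · intro k hk
        exact congrFun hx ⟨k, hk⟩
    obtain ⟨L, hL⟩ := LinearMap.exists_leftInverse_of_injective ρU hker
    set B : Matrix ι σ ℚ := LinearMap.toMatrix' (U.subtype.comp L) with hB
    have hBprop : ∀ q ∈ U, B.mulVec (fun k : σ => q k.1) = q := by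
      intro q hq
      have h1 : B.mulVec (fun k : σ => q k.1) = (U.subtype.comp L) (fun k : σ => q k.1) := by
        rw [hB, ← Matrix.toLin'_apply, Matrix.toLin'_toMatrix']
      rw [h1]
      have h2 : (fun k : σ => q k.1) = ρU ⟨q, hq⟩ := rfl
      rw [h2]
      have := congrFun (congrArg (fun (f : U →ₗ[ℚ] U) => f.toFun) hL) ⟨q, hq⟩
      simp only [LinearMap.comp_apply] at this ⊢
      rw [show L (ρU ⟨q, hq⟩) = ⟨q, hq⟩ from this]
      rfl
    -- the real version of the identity holds on all of W
    have hreal : ∀ x ∈ W, (B.map (fun q : ℚ => (q : ℝ))).mulVec (fun k : σ => x k.1) = x := by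
      intro x hx
      rw [hW] at hx
      induction hx using Submodule.span_induction with
      | mem t ht =>
          obtain ⟨s, hs, rfl⟩ := ht
          have h1 : (fun k : σ => castv s k.1) = fun k : σ => ((s k.1 : ℝ)) := rfl
          rw [h1, mulVec_castCommute, hBprop s (Submodule.subset_span hs)]
          rfl
      | zero => exact Matrix.mulVec_zero _
      | add a b _ _ ha hb =>
          have : (fun k : σ => (a + b) k.1) = (fun k : σ => a k.1) + (fun k : σ => b k.1) := rfl
          rw [this, Matrix.mulVec_add, ha, hb]
      | smul c a _ ha =>
          have : (fun k : σ => (c • a) k.1) = c • (fun k : σ => a k.1) := rfl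
          rw [this, Matrix.mulVec_smul, ha]
    have := hreal g hg.1
    have hzero : (fun k : σ => g k.1) = (0 : σ → ℝ) := by
      ext k; exact k.2
    rw [hzero, Matrix.mulVec_zero] at this
    exact hg.2.1 this.symm


/-- A rational subspace is spanned by finitely many rational vectors. -/
lemma IsRationalSubspace.finite_span {W : Submodule ℝ (ι → ℝ)} (h : IsRationalSubspace W) :
    ∃ T : Finset (ι → ℚ), W = Submodule.span ℝ (castv '' (↑T : Set (ι → ℚ))) := by
  obtain ⟨S, hS⟩ := h
  have hS' : W = Submodule.span ℝ (castv '' S) := hS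
  have hfg : (Submodule.span ℚ S).FG := IsNoetherian.noetherian _
  obtain ⟨T, hT⟩ := hfg
  refine ⟨T, le_antisymm ?_ ?_⟩
  · rw [hS']
    rw [Submodule.span_le]
    rintro x ⟨s, hs, rfl⟩
    have : s ∈ Submodule.span ℚ (↑T : Set (ι → ℚ)) := by
      rw [hT]; exact Submodule.subset_span hs
    exact castv_mem_span this
  · rw [Submodule.span_le]
    rintro x ⟨t, ht, rfl⟩
    have : t ∈ Submodule.span ℚ S := by
      rw [← hT]; exact Submodule.subset_span ht
    rw [hS']
    exact castv_mem_span this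

lemma mulVec_eq_one {m : Type*} [Fintype m] [DecidableEq m] {M : Matrix m m ℚ}
    (h : ∀ v : m → ℚ, M.mulVec v = v) : M = 1 := by
  ext a b
  have := congrFun (h (fun k => if k = b then 1 else 0)) a
  simp only [Matrix.mulVec, dotProduct, mul_ite, mul_one, mul_zero] at this
  rw [Finset.sum_ite_eq' Finset.univ b (fun k => M a k)] at this
  simp only [Finset.mem_univ, if_true] at this
  rw [this]
  by_cases hab : a = b <;> simp [Matrix.one_apply, hab, eq_comm]

open Classical in
/-- Every elementary vector of the orthogonal complement of a rational subspace is a real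
multiple of (the cast of) a rational vector. -/
lemma elementary_rational_orth {T : Finset (ι → ℚ)} {W : Submodule ℝ (ι → ℝ)}
    (hW : W = Submodule.span ℝ (castv '' (↑T : Set (ι → ℚ)))) {h : ι → ℝ}
    (hh : IsElementary (orthComp W) h) :
    ∃ q : ι → ℚ, ∃ t : ℝ, t ≠ 0 ∧ castv q = t • h := by
  by_cases hex : ∃ q : ι → ℚ, q ≠ 0 ∧ (∀ s ∈ T, ∑ i, q i * s i = 0) ∧
      ∀ k, h k = 0 → q k = 0
  · obtain ⟨q, hq0, hqT, hqv⟩ := hex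
    have hqW : castv q ∈ orthComp W := by
      rw [hW]
      apply mem_orthComp_span
      rintro x ⟨s, hs, rfl⟩
      have : ((∑ i, q i * s i : ℚ) : ℝ) = 0 := by rw [hqT s hs]; norm_num
      rw [← this]
      push_cast
      rfl
    have hqsupp : ∀ k, castv q k ≠ 0 → h k ≠ 0 := by
      intro k hk hhk
      exact hk (by simp [castv, hqv k hhk])
    obtain ⟨t, ht⟩ := hh.prop hqW hqsupp
    refine ⟨q, t, ?_, ht⟩
    intro ht0
    apply hq0
    ext k
    have := congrFun ht k
    rw [ht0] at this
    simpa [castv] using this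
  · exfalso
    set σ := (↥(↑T : Set (ι → ℚ))) ⊕ {k : ι // h k = 0} with hσ
    set A : Matrix σ ι ℚ := Matrix.of (fun idx k =>
      match idx with
      | Sum.inl t => (t : ι → ℚ) k
      | Sum.inr m => if k = m.1 then 1 else 0) with hA
    have hker : LinearMap.ker A.mulVecLin = ⊥ := by
      rw [LinearMap.ker_eq_bot']
      intro q hq
      by_contra hq0
      apply hex
      refine ⟨q, hq0, ?_, ?_⟩
      · intro s hs
        have hthis := congrFun hq (Sum.inl ⟨s, hs⟩)
        simp only [Matrix.mulVecLin_apply, Matrix.mulVec, dotProduct,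
          Pi.zero_apply] at hthis
        have h2 : (∑ i, q i * s i) = ∑ x, A (Sum.inl ⟨s, hs⟩) x * q x := by
          apply Finset.sum_congr rfl
          intro k _
          show q k * s k = s k * q k
          ring
        rw [h2]
        exact hthis
      · intro k hk
        have hthis := congrFun hq (Sum.inr ⟨k, hk⟩)
        simp only [Matrix.mulVecLin_apply, Matrix.mulVec, dotProduct,
          Pi.zero_apply] at hthis
        have h2 : (∑ x, A (Sum.inr ⟨k, hk⟩) x * q x) = ∑ x, if x = k then q x else 0 := by
          apply Finset.sum_congr rfl
          intro m _
          show (if m = k then (1:ℚ) else 0) * q m = _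
          by_cases hmk : m = k <;> simp [hmk]
        rw [h2, Finset.sum_ite_eq' Finset.univ k q] at hthis
        simpa using hthis
    obtain ⟨L, hL⟩ := LinearMap.exists_leftInverse_of_injective A.mulVecLin hker
    set B : Matrix ι σ ℚ := LinearMap.toMatrix' L with hB
    have hBA : B * A = 1 := by
      apply mulVec_eq_one
      intro v
      rw [← Matrix.mulVec_mulVec]
      have h1 : B.mulVec (A.mulVec v) = L (A.mulVec v) := by
        rw [hB, ← Matrix.toLin'_apply, Matrix.toLin'_toMatrix']
      rw [h1]
      have := congrFun (congrArg (fun (f : (ι → ℚ) →ₗ[ℚ] (ι → ℚ)) => f.toFun) hL) v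
      simpa using this
    have hreal : ∀ x : ι → ℝ,
        (B.map (fun q : ℚ => (q : ℝ))).mulVec ((A.map (fun q : ℚ => (q : ℝ))).mulVec x) = x := by
      intro x
      rw [Matrix.mulVec_mulVec]
      have hmm : (B * A).map (fun q : ℚ => (q : ℝ)) =
          (B.map (fun q : ℚ => (q : ℝ))) * (A.map (fun q : ℚ => (q : ℝ))) := by
        exact Matrix.map_mul (L := B) (M := A) (f := Rat.castHom ℝ)
      have hone : (B.map (fun q : ℚ => (q : ℝ))) * (A.map (fun q : ℚ => (q : ℝ))) = 1 := by
        rw [← hmm, hBA, Matrix.map_one _ (by norm_num) (by norm_num)]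
      rw [hone, Matrix.one_mulVec]
    have hAh : (A.map (fun q : ℚ => (q : ℝ))).mulVec h = 0 := by
      ext idx
      match idx with
      | Sum.inl t =>
          have htW : castv (t : ι → ℚ) ∈ W := by
            rw [hW]; exact Submodule.subset_span (Set.mem_image_of_mem _ t.2)
          have hthis := hh.1 _ htW
          simp only [Matrix.mulVec, dotProduct, Matrix.map_apply, Pi.zero_apply]
          have h2 : (∑ x, ((A (Sum.inl t) x : ℚ) : ℝ) * h x) = ∑ x, h x * castv (↑t) x := by
            apply Finset.sum_congr rfl
            intro k _
            show (((t : ι → ℚ) k : ℝ)) * h k = h k * (((t : ι → ℚ) k : ℝ))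
            ring
          rw [h2]
          exact hthis
      | Sum.inr m =>
          simp only [Matrix.mulVec, dotProduct, Matrix.map_apply, Pi.zero_apply]
          have h2 : (∑ x, ((A (Sum.inr m) x : ℚ) : ℝ) * h x) = ∑ x, if x = m.1 then h x else 0 := by
            apply Finset.sum_congr rfl
            intro k _
            show (((if k = m.1 then (1:ℚ) else 0) : ℚ) : ℝ) * h k = _
            by_cases hk : k = m.1 <;> simp [hk]
          rw [h2, Finset.sum_ite_eq' Finset.univ m.1 h]
          simp [m.2]
    have := hreal h
    rw [hAh, Matrix.mulVec_zero] at this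
    exact hh.2.1 this.symm


open Classical in
/-- From a rational multiple of an elementary vector, produce a normalized integer
elementary vector that is a real multiple of it. -/
lemma exists_int_elementary {V : Submodule ℝ (ι → ℝ)} {h : ι → ℝ} (hh : IsElementary V h)
    {q : ι → ℚ} {t : ℝ} (ht : t ≠ 0) (hq : castv q = t • h) :
    ∃ u : ι → ℤ, IsIntElementary V u ∧ ∃ s : ℝ, s ≠ 0 ∧ (fun i => ((u i : ℝ))) = s • h := by
  set m : ℕ := ∏ i, (q i).den with hm
  have hm0 : m ≠ 0 := Finset.prod_ne_zero_iff.mpr fun i _ => (q i).den_ne_zero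
  set u0 : ι → ℤ := fun i => (q i).num * ((m : ℤ) / ((q i).den : ℤ)) with hu0def
  have hu0 : ∀ i, ((u0 i : ℚ)) = (m : ℚ) * q i := by
    intro i
    have hdvd : ((q i).den : ℤ) ∣ (m : ℤ) :=
      Int.natCast_dvd_natCast.mpr (Finset.dvd_prod_of_mem _ (Finset.mem_univ i))
    obtain ⟨c, hc⟩ := hdvd
    have hden : ((q i).den : ℚ) ≠ 0 := by exact_mod_cast (q i).den_ne_zero
    have hnum : ((q i).num : ℚ) = q i * ((q i).den : ℚ) :=
      (div_eq_iff hden).mp (Rat.num_div_den (q i))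
    have hcQ : (m : ℚ) = ((q i).den : ℚ) * (c : ℚ) := by exact_mod_cast hc
    have hediv : (m : ℤ) / ((q i).den : ℤ) = c := by
      rw [hc]
      exact Int.mul_ediv_cancel_left _ (by exact_mod_cast (q i).den_ne_zero)
    rw [hu0def]
    simp only [hediv]
    push_cast
    rw [hnum, hcQ]
    ring
  have hqR : ∀ i, ((q i : ℝ)) = t * h i := fun i => congrFun hq i
  have hu0R : ∀ i, ((u0 i : ℝ)) = ((m : ℝ) * t) * h i := by
    intro i
    have h1 : (((u0 i : ℚ)) : ℝ) = ((m : ℚ) * q i : ℚ) := by exact_mod_cast hu0 i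
    push_cast at h1
    rw [h1, hqR i]
    ring
  obtain ⟨i0, hi0⟩ : ∃ i0, h i0 ≠ 0 := by
    by_contra hc
    push_neg at hc
    exact hh.2.1 (funext hc)
  have hmt : (m : ℝ) * t ≠ 0 := mul_ne_zero (by exact_mod_cast hm0) ht
  have hu00 : u0 i0 ≠ 0 := by
    intro h0
    have := hu0R i0
    rw [h0] at this
    simp only [Int.cast_zero] at this
    exact hi0 (by
      rcases mul_eq_zero.mp this.symm with h1 | h2
      · exact absurd h1 hmt
      · exact h2)
  set d : ℕ := Finset.univ.gcd (fun i => (u0 i).natAbs) with hd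
  have hd0 : d ≠ 0 := by
    intro h0
    rw [hd, Finset.gcd_eq_zero_iff] at h0
    exact hu00 (Int.natAbs_eq_zero.mp (h0 i0 (Finset.mem_univ i0)))
  have hdd : ∀ i, (d : ℤ) ∣ u0 i := fun i =>
    Int.natCast_dvd.mpr (Finset.gcd_dvd (Finset.mem_univ i))
  set u : ι → ℤ := fun i => u0 i / (d : ℤ) with hu
  have hu0u : ∀ i, u0 i = (d : ℤ) * u i := fun i => (Int.mul_ediv_cancel' (hdd i)).symm
  have habs : ∀ i, (u0 i).natAbs = d * (u i).natAbs := by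
    intro i
    rw [hu0u i, Int.natAbs_mul, Int.natAbs_natCast]
  have hgcd1 : Finset.univ.gcd (fun i => (u i).natAbs) = 1 := by
    have h1 : d = Finset.univ.gcd (fun i => d * (u i).natAbs) := by
      rw [← Finset.gcd_congr rfl (fun i _ => habs i)]
    rw [Finset.gcd_mul_left, normalize_eq] at h1
    nth_rewrite 1 [show d = d * 1 by ring] at h1
    exact (mul_left_cancel₀ hd0 h1).symm
  have hcast : (fun i => ((u i : ℝ))) = (((m : ℝ) * t) / (d : ℝ)) • h := by
    funext i
    have h1 : ((u0 i : ℝ)) = (d : ℝ) * ((u i : ℝ)) := by exact_mod_cast hu0u i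
    have h2 : ((u i : ℝ)) = ((u0 i : ℝ)) / (d : ℝ) := by
      rw [h1]
      field_simp
    rw [h2, hu0R i]
    simp only [Pi.smul_apply, smul_eq_mul]
    ring
  have hs : ((m : ℝ) * t) / (d : ℝ) ≠ 0 := by
    apply div_ne_zero hmt
    exact_mod_cast hd0
  refine ⟨u, ⟨?_, hgcd1⟩, _, hs, hcast⟩
  rw [hcast]
  exact hh.smul hs


open Classical in
/-- The key divisibility: every entry of a normalized integer elementary vector of `W'`
divides `dotKappa (orthComp W')`, provided elementary vectors of `orthComp W'` admit
rational representatives. -/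
lemma key_dvd {W' : Submodule ℝ (ι → ℝ)}
    (hor : ∀ h : ι → ℝ, IsElementary (orthComp W') h →
      ∃ q : ι → ℚ, ∃ t : ℝ, t ≠ 0 ∧ castv q = t • h)
    {g : ι → ℤ} (hg : IsIntElementary W' g) {i : ι} (hi : g i ≠ 0) :
    (g i).natAbs ∣ dotKappa (orthComp W') := by
  obtain ⟨hDpos, hDdvd⟩ := dotKappa_mem (orthComp W')
  set D := dotKappa (orthComp W') with hD
  have hD0 : D ≠ 0 := hDpos.ne'
  have hgi0 : (g i).natAbs ≠ 0 := Int.natAbs_ne_zero.mpr hi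
  rw [← Nat.factorization_le_iff_dvd hgi0 hD0, Finsupp.le_def]
  intro p
  set a := (g i).natAbs.factorization p with ha
  by_cases ha0 : a = 0
  · simp [ha0]
  have hp : p.Prime := by
    apply Nat.prime_of_mem_primeFactors
    rw [← Nat.support_factorization]
    exact Finsupp.mem_support_iff.mpr ha0
  have hpa : p ^ a ∣ (g i).natAbs := Nat.ordProj_dvd _ _
  obtain ⟨j, hgj0, hpj⟩ : ∃ j, g j ≠ 0 ∧ ¬ p ∣ (g j).natAbs := by
    by_contra hc
    push_neg at hc
    have hdvd : p ∣ Finset.univ.gcd (fun k => (g k).natAbs) := by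
      apply Finset.dvd_gcd
      intro k _
      by_cases hk : g k = 0
      · simp [hk]
      · exact hc k hk
    rw [hg.2] at hdvd
    exact hp.ne_one (Nat.dvd_one.mp hdvd)
  have hij : i ≠ j := by
    intro he
    exact hpj (he ▸ (dvd_pow_self p ha0).trans hpa)
  have hgiR : ((g i : ℝ)) ≠ 0 := by exact_mod_cast hi
  have hgjR : ((g j : ℝ)) ≠ 0 := by exact_mod_cast hgj0
  obtain ⟨h, hhE, hhi, hhj, hrel⟩ := swap_lemma hg.1 hij hgiR hgjR
  obtain ⟨q, t, ht, hq⟩ := hor h hhE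
  obtain ⟨u, huI, s, hs, hu⟩ := exists_int_elementary hhE ht hq
  have huk : ∀ k, ((u k : ℝ)) = s * h k := by
    intro k
    have := congrFun hu k
    simpa using this
  have huj : u j ≠ 0 := by
    intro h0
    apply hhj
    have := huk j
    rw [h0] at this
    simp only [Int.cast_zero] at this
    rcases mul_eq_zero.mp this.symm with h1 | h2
    · exact absurd h1 hs
    · exact h2
  have hrelZ : u i * g i + u j * g j = 0 := by
    have hR : ((u i * g i + u j * g j : ℤ) : ℝ) = s * (h i * (g i : ℝ) + h j * (g j : ℝ)) := by
      push_cast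
      rw [huk i, huk j]
      ring
    rw [hrel, mul_zero] at hR
    exact_mod_cast hR
  have habs : (u j).natAbs * (g j).natAbs = (u i).natAbs * (g i).natAbs := by
    rw [← Int.natAbs_mul, ← Int.natAbs_mul,
      show u j * g j = -(u i * g i) by linarith, Int.natAbs_neg]
  have hpadvd : p ^ a ∣ (u j).natAbs * (g j).natAbs := by
    rw [habs]
    exact Dvd.dvd.mul_left hpa _
  have hcop : Nat.Coprime (p ^ a) ((g j).natAbs) :=
    Nat.Coprime.pow_left a ((Nat.Prime.coprime_iff_not_dvd hp).mpr hpj)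
  have hpu : p ^ a ∣ (u j).natAbs := hcop.dvd_of_dvd_mul_right hpadvd
  have hujD : (u j).natAbs ∣ D := hDdvd u huI j huj
  exact (Nat.Prime.pow_dvd_iff_le_factorization hp hD0).mp (hpu.trans hujD)

/-- the lcm-circuit imbalance is self-dual: `κ̇_W = κ̇_{W^⊥}` for rational `W`. -/
theorem dotKappa_self_dual {n : ℕ} (W : Submodule ℝ (Fin n → ℝ))
    (hrat : IsRationalSubspace W) :
    dotKappa W = dotKappa (orthComp W) := by
  obtain ⟨T, hT⟩ := hrat.finite_span
  apply le_antisymm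
  · apply Nat.sInf_le
    exact ⟨(dotKappa_mem (orthComp W)).1,
      fun g hg i hi => key_dvd (fun h hh => elementary_rational_orth hT hh) hg hi⟩
  · have horth : orthComp (orthComp W) = W := orthComp_orthComp W
    apply Nat.sInf_le
    refine ⟨(dotKappa_mem W).1, fun g hg i hi => ?_⟩
    have := key_dvd (W' := orthComp W)
      (fun h hh => by
        rw [horth] at hh
        exact elementary_rational_span hT hh) hg hi
    rwa [horth] at this
end

section
/- For any linear subspace W ⊆ R^n and any subset J ⊆ [n], both the restriction W_J = π_J(W ∩ R^n_J) and the projection π_J(W) have circuit imbalance at most κ_W. -/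
open Finset

variable {ι : Type*} [Fintype ι] [DecidableEq ι]

/-- The coordinate projection `π_J` as a linear map. -/
def coordRestrict {n : ℕ} (J : Finset (Fin n)) : (Fin n → ℝ) →ₗ[ℝ] (↥J → ℝ) :=
  LinearMap.funLeft ℝ ℝ (fun i : ↥J => (i : Fin n))

/-- The subspace `ℝ^n_J` of vectors vanishing outside `J`. -/
def zeroOutside {n : ℕ} (J : Finset (Fin n)) : Submodule ℝ (Fin n → ℝ) where
  carrier := {x | ∀ i, i ∉ J → x i = 0}
  add_mem' := by intro a b ha hb i hi; simp [ha i hi, hb i hi]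
  zero_mem' := by intro i _; rfl
  smul_mem' := by intro c a ha i hi; simp [ha i hi]

/-! Every elementary vector of `W_J` or of `π_J(W)` is the restriction to `J` of an elementary
vector of `W`, namely of any of its preimages (in `W ∩ ℝ^n_J`, resp. in `W`) of minimal support.
So the imbalance ratios of `W_J` and `π_J(W)` are among those of `W`, and these form a finite set
because elementary vectors with the same support are proportional. -/

open Function

variable {α β : Type*}

lemma support_sub_smul_subset_diff {𝕜 : Type*} [Field 𝕜] {a b : α → 𝕜} {S : Set α}
    (ha : support a ⊆ S) (hb : support b ⊆ S) {i : α} (hi : b i ≠ 0) :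
    support (a - (a i / b i) • b) ⊆ S \ {i} := by
  intro k hk
  refine ⟨(support_sub a _ |>.trans (Set.union_subset ha
    ((support_smul_subset_right _ _).trans hb))) hk, ?_⟩
  rintro rfl
  exact hk (by simp [div_mul_cancel₀ _ hi])

section Elementary

variable {W : Submodule ℝ (α → ℝ)}

lemma IsElementary.exists_eq_smul {g h : α → ℝ} (hg : IsElementary W g) (hW : h ∈ W)
    (hs : support h ⊆ support g) : ∃ c : ℝ, h = c • g := by
  obtain ⟨hgW, hg0, hgmin⟩ := hg
  obtain ⟨i, hi⟩ := Function.ne_iff.mp hg0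
  refine ⟨h i / g i, sub_eq_zero.mp (by_contra fun hu ↦ ?_)⟩
  have hsub := support_sub_smul_subset_diff hs subset_rfl hi
  have heq := hgmin _ (W.sub_mem hW (W.smul_mem _ hgW)) hu (hsub.trans Set.sdiff_subset)
  exact (hsub ((Set.ext_iff.mp heq i).mpr hi)).2 rfl

lemma IsElementary.abs_div_eq_of_support_eq {g g' : α → ℝ} (hg : IsElementary W g)
    (hg' : g' ∈ W) (hs : support g' = support g) {i j : α} (hi : g' i ≠ 0) :
    |g' j| / |g' i| = |g j| / |g i| := by
  obtain ⟨c, rfl⟩ := hg.exists_eq_smul hg' hs.le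
  have hc : c ≠ 0 := left_ne_zero_of_mul hi
  simp only [Pi.smul_apply, smul_eq_mul, abs_mul]
  exact mul_div_mul_left _ _ (abs_ne_zero.mpr hc)

def circuitRatios (W : Submodule ℝ (α → ℝ)) : Set ℝ :=
  {t : ℝ | ∃ g : α → ℝ, IsElementary W g ∧ ∃ i j, g i ≠ 0 ∧ g j ≠ 0 ∧ t = |g j| / |g i|}

lemma circuitRatios_finite [Finite α] : (circuitRatios W).Finite := by
  refine (Set.finite_iUnion fun p : Set α × α × α ↦ Set.Subsingleton.finite
    (s := {t | ∃ g, IsElementary W g ∧ support g = p.1 ∧ g p.2.1 ≠ 0 ∧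
      t = |g p.2.2| / |g p.2.1|}) ?_).subset ?_
  · rintro _ ⟨g, hg, hgs, -, rfl⟩ _ ⟨g', hg', hg's, hi', rfl⟩
    exact (hg.abs_div_eq_of_support_eq hg'.1 (hg's.trans hgs.symm) hi').symm
  · rintro _ ⟨g, hg, i, j, hi, -, rfl⟩
    exact Set.mem_iUnion.mpr ⟨(support g, i, j), g, hg, rfl, hi, rfl⟩

lemma kappa_le_kappa_of_forall_lift [Finite α] {V : Submodule ℝ (β → ℝ)} (σ : β → α)
    (hlift : ∀ g, IsElementary V g → ∃ w, IsElementary W w ∧ LinearMap.funLeft ℝ ℝ σ w = g) :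
    kappa V ≤ kappa W := by
  refine csSup_le_csSup ((Set.finite_singleton 1).union circuitRatios_finite).bddAbove
    ⟨1, Or.inl rfl⟩ (Set.union_subset_union_right _ ?_)
  rintro _ ⟨g, hg, i, j, hi, hj, rfl⟩
  obtain ⟨w, hw, rfl⟩ := hlift g hg
  exact ⟨w, hw, σ i, σ j, hi, hj, rfl⟩

end Elementary

theorem exists_isElementary_funLeft_eq [Finite α] {W W' : Submodule ℝ (α → ℝ)} (σ : β → α)
    (hle : W' ≤ W) (hW' : ∀ w ∈ W', ∀ h ∈ W, support h ⊆ support w → h ∈ W')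
    {g : β → ℝ} (hg : IsElementary (W'.map (LinearMap.funLeft ℝ ℝ σ)) g) :
    ∃ w, IsElementary W w ∧ LinearMap.funLeft ℝ ℝ σ w = g := by
  set π := LinearMap.funLeft ℝ ℝ σ
  obtain ⟨w, ⟨hwW', hwg⟩, hmin⟩ :=
    (InvImage.wf (fun w : α → ℝ ↦ (support w).ncard) wellFounded_lt).has_min
    {w | w ∈ W' ∧ π w = g} (by obtain ⟨w, hw, hwg⟩ := hg.1; exact ⟨w, hw, hwg⟩)
  refine ⟨w, ⟨hle hwW', ?_, fun h hW hne hs ↦ ?_⟩, hwg⟩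
  · rintro rfl
    exact hg.2.1 (by rw [← hwg, map_zero])
  have hhW' := hW' w hwW' h hW hs
  obtain ⟨c, hc⟩ := hg.exists_eq_smul (Submodule.mem_map_of_mem hhW')
    (fun k hk ↦ by rw [← hwg]; exact hs hk)
  obtain ⟨i, hi⟩ := Function.ne_iff.mp hne
  -- Cancelling `w i` with `h` either yields, after rescaling, a lift of smaller support, or
  -- shows that `s • h` is itself a lift.
  set s := w i / h i
  have hwi : w i ≠ 0 := hs hi
  have hlt : (support (w - s • h)).ncard < (support w).ncard := Set.ncard_lt_ncard
    ((support_sub_smul_subset_diff subset_rfl hs hi).trans_ssubset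
      (Set.sdiff_singleton_ssubset.mpr hwi))
  have hπu : π (w - s • h) = (1 - s * c) • g := by
    rw [map_sub, map_smul, hc, hwg, smul_smul, sub_smul, one_smul]
  by_cases hsc : 1 - s * c = 0
  · have hlift : π (s • h) = g := by
      rw [map_smul, hc, smul_smul, show s * c = 1 by linarith, one_smul]
    have hcard : (support w).ncard ≤ (support (s • h)).ncard :=
      not_lt.mp (hmin (s • h) ⟨W'.smul_mem s hhW', hlift⟩)
    rw [support_const_smul_of_ne_zero _ _ (div_ne_zero hwi hi)] at hcard
    exact Set.eq_of_subset_of_ncard_le hs hcard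
  · rw [← support_const_smul_of_ne_zero _ _ (inv_ne_zero hsc)] at hlt
    exact absurd hlt <| hmin _ ⟨W'.smul_mem _ (W'.sub_mem hwW' (W'.smul_mem _ hhW')),
      by rw [map_smul, hπu, smul_smul, inv_mul_cancel₀ hsc, one_smul]⟩

/-- both the restriction `W_J = π_J(W ∩ ℝ^n_J)` and the projection `π_J(W)`
have circuit imbalance at most `κ_W`. -/
theorem kappa_restriction_projection_le {n : ℕ} (W : Submodule ℝ (Fin n → ℝ))
    (J : Finset (Fin n)) :
    kappa ((W ⊓ zeroOutside J).map (coordRestrict J)) ≤ kappa W ∧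
      kappa (W.map (coordRestrict J)) ≤ kappa W := by
  have hJ : ∀ w ∈ W ⊓ zeroOutside J, ∀ h ∈ W, support h ⊆ support w → h ∈ W ⊓ zeroOutside J :=
    fun w hw h hW hs ↦ ⟨hW, fun i hi ↦ by_contra fun hhi ↦ hs hhi (hw.2 i hi)⟩
  exact ⟨kappa_le_kappa_of_forall_lift _ fun _ ↦ exists_isElementary_funLeft_eq _ inf_le_left hJ,
    kappa_le_kappa_of_forall_lift _ fun _ ↦
      exists_isElementary_funLeft_eq _ le_rfl fun _ _ _ hW _ ↦ hW⟩
end
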